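/- Let N ≥ 2 with α_N = α_0, all s_i > 0, all cos α_i ∈ (0,1]. Then D := G(0,N) − cos²(α_0) G(1,N-1) + 2(−1)^{N+1}Π(0,N) satisfies D > 2 s_{N-1} · G(0,N-1). In particular D > 0 and G(0,N-1)/D < 1/(2 s_{N-1}). -/

import Mathlib

/-- Auxiliary recursion: `Gaux s α j n` corresponds to `G(j, j-1+n)`. -/
noncomputable def Gaux (s α : ℤ → ℝ) (j : ℤ) : ℕ → ℝ
  | 0 => 0
  | 1 => 1
  | (n+2) => (2 * s (j + n) + Real.cos (α (j + n)) + Real.cos (α (j + n + 1))) * Gaux s α j (n+1)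
      - (Real.cos (α (j + n)))^2 * Gaux s α j n

/-- `G s α j k` is the recursively defined quantity `G(j,k)`, with `G(j,j-1)=0`, `G(j,j)=1`,
`G(j,k) = (2 s_{k-1} + cos α_{k-1} + cos α_k) G(j,k-1) − cos²(α_{k-1}) G(j,k-2)` for `k ≥ j+1`. -/
noncomputable def G (s α : ℤ → ℝ) (j k : ℤ) : ℝ := Gaux s α j (k - (j-1)).toNat

/-- `Pprod α a b = ∏_{i=a}^{b-1} cos (α i)`. -/
noncomputable def Pprod (α : ℤ → ℝ) (a b : ℤ) : ℝ := ∏ i ∈ Finset.Ico a b, Real.cos (α i)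

/-!
With `c i = cos (α i)`, `G s α j k` is the continuant of the tridiagonal matrix with diagonal
`2 s i + c i + c (i + 1)` and off-diagonal products `c i ^ 2`. Expanding it along its last row,
resp. its first row, both `G j k - c k * G j (k - 1)` and `G j k - c j * G (j + 1) k` satisfy a
recursion `X' = 2 s G + c X` with positive coefficients, so by induction they dominate the
corresponding product of cosines, strictly as soon as `j < k`. By the recursion for `G 0 N` and
`α N = α 0`, `D - 2 s (N - 1) G 0 (N - 1)` equals
`c (N-1) (G 0 (N-1) - c (N-1) G 0 (N-2)) + c 0 (G 0 (N-1) - c 0 G 1 (N-1)) ± 2 Pprod α 0 N`,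
where the first two terms each exceed `Pprod α 0 N`.
-/

open Real

section Continuant

variable {s α : ℤ → ℝ} {j k : ℤ}

theorem G_eq_zero_of_lt (h : k < j) : G s α j k = 0 := by
  rw [G, Int.toNat_of_nonpos (by omega)]
  rfl

theorem G_self : G s α j j = 1 := by
  rw [G, show (j - (j - 1)).toNat = 1 by omega]
  rfl

theorem G_succ (h : j ≤ k) :
    G s α j (k + 1) = (2 * s k + cos (α k) + cos (α (k + 1))) * G s α j k
      - cos (α k) ^ 2 * G s α j (k - 1) := by
  obtain ⟨n, rfl⟩ : ∃ n : ℕ, k = j + n := ⟨(k - j).toNat, by omega⟩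
  simp only [G, show (j + n + 1 - (j - 1)).toNat = n + 2 by omega,
    show (j + n - (j - 1)).toNat = n + 1 by omega, show (j + n - 1 - (j - 1)).toNat = n by omega]
  rfl

theorem Gaux_add_two_eq_first_row (j : ℤ) (n : ℕ) :
    Gaux s α j (n + 2) = (2 * s j + cos (α j) + cos (α (j + 1))) * Gaux s α (j + 1) (n + 1)
      - cos (α (j + 1)) ^ 2 * Gaux s α (j + 2) n := by
  induction n using Nat.twoStepInduction generalizing j with
  | zero => simp [Gaux]
  | one => simp [Gaux]; ring
  | more n ih₁ ih₂ =>
    have step (i : ℤ) (m : ℕ) : Gaux s α i (m + 2) = (2 * s (i + m) + cos (α (i + m))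
        + cos (α (i + m + 1))) * Gaux s α i (m + 1) - cos (α (i + m)) ^ 2 * Gaux s α i m := rfl
    have e₁ : j + 1 + ((n + 1 : ℕ) : ℤ) = j + ((n + 2 : ℕ) : ℤ) := by push_cast; ring
    have e₂ : j + 2 + (n : ℤ) = j + ((n + 2 : ℕ) : ℤ) := by push_cast; ring
    rw [step j (n + 2), step (j + 1) (n + 1), step (j + 2) n, e₁, e₂, ih₁, ih₂]
    ring

theorem G_eq_first_row (h : j < k) :
    G s α j k = (2 * s j + cos (α j) + cos (α (j + 1))) * G s α (j + 1) k
      - cos (α (j + 1)) ^ 2 * G s α (j + 2) k := by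
  obtain ⟨n, rfl⟩ : ∃ n : ℕ, k = j + 1 + n := ⟨(k - j - 1).toNat, by omega⟩
  simp only [G, show (j + 1 + n - (j - 1)).toNat = n + 2 by omega,
    show (j + 1 + n - (j + 1 - 1)).toNat = n + 1 by omega,
    show (j + 1 + n - (j + 2 - 1)).toNat = n by omega]
  exact Gaux_add_two_eq_first_row j n

theorem Pprod_pos (hα : ∀ i, 0 < cos (α i)) (a b : ℤ) : 0 < Pprod α a b :=
  Finset.prod_pos fun i _ => hα i

theorem Pprod_self (a : ℤ) : Pprod α a a = 1 := by
  simp [Pprod]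

theorem Pprod_add_one (h : j ≤ k) : Pprod α j (k + 1) = Pprod α j k * cos (α k) :=
  (Finset.prod_Ico_mul_eq_prod_Ico_add_one h _).symm

theorem Pprod_eq_cos_mul (h : j < k) : Pprod α j k = cos (α j) * Pprod α (j + 1) k := by
  rw [Pprod, Pprod, ← Finset.insert_Ico_add_one_left_eq_Ico h, Finset.prod_insert (by simp)]

theorem Pprod_lt_G_sub_right_step (hs : ∀ i, 0 < s i) (hα : ∀ i, 0 < cos (α i))
    (hjk : j ≤ k) (hG : 0 < G s α j k)
    (hP : Pprod α j k ≤ G s α j k - cos (α k) * G s α j (k - 1)) :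
    Pprod α j (k + 1) < G s α j (k + 1) - cos (α (k + 1)) * G s α j k := by
  have hrec : G s α j (k + 1) - cos (α (k + 1)) * G s α j k
      = 2 * s k * G s α j k + cos (α k) * (G s α j k - cos (α k) * G s α j (k - 1)) := by
    rw [G_succ hjk]; ring
  rw [hrec, Pprod_add_one hjk, mul_comm]
  have hpos := mul_pos (mul_pos two_pos (hs k)) hG
  have hscaled := mul_le_mul_of_nonneg_left hP (hα k).le
  linarith

theorem G_pos_and_Pprod_le_G_sub_right (hs : ∀ i, 0 < s i) (hα : ∀ i, 0 < cos (α i)) (h : j ≤ k) :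
    0 < G s α j k ∧ Pprod α j k ≤ G s α j k - cos (α k) * G s α j (k - 1) := by
  induction k, h using Int.leInduction with
  | base => simp [G_self, G_eq_zero_of_lt, Pprod_self]
  | succ k hjk ih =>
    have hP := Pprod_lt_G_sub_right_step hs hα hjk ih.1 ih.2
    have hpos := mul_pos (hα (k + 1)) ih.1
    have hprod := Pprod_pos hα j (k + 1)
    exact ⟨by linarith, by rw [add_sub_cancel_right]; exact hP.le⟩

theorem G_pos (hs : ∀ i, 0 < s i) (hα : ∀ i, 0 < cos (α i)) (h : j ≤ k) : 0 < G s α j k :=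
  (G_pos_and_Pprod_le_G_sub_right hs hα h).1

theorem Pprod_lt_cos_mul_G_sub_right (hs : ∀ i, 0 < s i) (hα : ∀ i, 0 < cos (α i)) (h : j < k) :
    Pprod α j (k + 1) < cos (α k) * (G s α j k - cos (α k) * G s α j (k - 1)) := by
  obtain ⟨hG, hP⟩ := G_pos_and_Pprod_le_G_sub_right hs hα (show j ≤ k - 1 by omega)
  have hlt := Pprod_lt_G_sub_right_step hs hα (show j ≤ k - 1 by omega) hG hP
  rw [sub_add_cancel] at hlt
  rw [Pprod_add_one h.le, mul_comm]
  exact mul_lt_mul_of_pos_left hlt (hα k)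

theorem Pprod_lt_G_sub_left_step (hs : ∀ i, 0 < s i) (hα : ∀ i, 0 < cos (α i)) (hjk : j < k)
    (hP : Pprod α (j + 2) (k + 1) ≤ G s α (j + 1) k - cos (α (j + 1)) * G s α (j + 2) k) :
    Pprod α (j + 1) (k + 1) < G s α j k - cos (α j) * G s α (j + 1) k := by
  have hrec : G s α j k - cos (α j) * G s α (j + 1) k = 2 * s j * G s α (j + 1) k
      + cos (α (j + 1)) * (G s α (j + 1) k - cos (α (j + 1)) * G s α (j + 2) k) := by
    rw [G_eq_first_row hjk]; ring
  rw [hrec, Pprod_eq_cos_mul (show j + 1 < k + 1 by omega), show j + 1 + 1 = j + 2 by ring]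
  have hpos := mul_pos (mul_pos two_pos (hs j)) (G_pos hs hα (show j + 1 ≤ k by omega))
  have hscaled := mul_le_mul_of_nonneg_left hP (hα (j + 1)).le
  linarith

theorem Pprod_le_G_sub_left (hs : ∀ i, 0 < s i) (hα : ∀ i, 0 < cos (α i)) (h : j ≤ k) :
    Pprod α (j + 1) (k + 1) ≤ G s α j k - cos (α j) * G s α (j + 1) k := by
  induction j, h using Int.leInductionDown with
  | base => simp [G_self, G_eq_zero_of_lt, Pprod_self]
  | pred j hjk ih =>
    have hlt := Pprod_lt_G_sub_left_step hs hα (show j - 1 < k by omega)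
    rw [sub_add_cancel, show j - 1 + 2 = j + 1 by ring] at hlt
    rw [sub_add_cancel]
    exact (hlt ih).le

theorem Pprod_lt_cos_mul_G_sub_left (hs : ∀ i, 0 < s i) (hα : ∀ i, 0 < cos (α i)) (h : j < k) :
    Pprod α j (k + 1) < cos (α j) * (G s α j k - cos (α j) * G s α (j + 1) k) := by
  have hle := Pprod_le_G_sub_left hs hα (show j + 1 ≤ k by omega)
  rw [show j + 1 + 1 = j + 2 by ring] at hle
  have hlt := Pprod_lt_G_sub_left_step hs hα h hle
  rw [Pprod_eq_cos_mul (show j < k + 1 by omega)]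
  exact mul_lt_mul_of_pos_left hlt (hα j)

end Continuant

theorem neg_le_neg_one_pow_mul {p : ℝ} (hp : 0 ≤ p) (n : ℕ) : -p ≤ (-1) ^ n * p := by
  simpa [abs_mul, abs_of_nonneg hp] using neg_abs_le ((-1 : ℝ) ^ n * p)

theorem stmt14_general (s α : ℤ → ℝ) (N : ℤ) (hN : 2 ≤ N) (hper : α N = α 0)
    (hs : ∀ i, 0 < s i)
    (hα : ∀ i, 0 < Real.cos (α i)) :
    2 * s (N-1) * G s α 0 (N-1) <
        G s α 0 N - (Real.cos (α 0))^2 * G s α 1 (N-1)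
          + 2 * ((-1 : ℝ)^(N+1).toNat * Pprod α 0 N) ∧
    0 < G s α 0 N - (Real.cos (α 0))^2 * G s α 1 (N-1)
          + 2 * ((-1 : ℝ)^(N+1).toNat * Pprod α 0 N) ∧
    G s α 0 (N-1) /
        (G s α 0 N - (Real.cos (α 0))^2 * G s α 1 (N-1)
          + 2 * ((-1 : ℝ)^(N+1).toNat * Pprod α 0 N)) < 1 / (2 * s (N-1)) := by
  have hN₁ : (0 : ℤ) < N - 1 := by omega
  have hrec := G_succ (s := s) (α := α) hN₁.le
  have hright := Pprod_lt_cos_mul_G_sub_right hs hα hN₁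
  have hleft := Pprod_lt_cos_mul_G_sub_left hs hα hN₁
  rw [sub_add_cancel, hper] at hrec
  rw [sub_add_cancel] at hright hleft
  rw [zero_add] at hleft
  have hsign := neg_le_neg_one_pow_mul (Pprod_pos hα 0 N).le (N + 1).toNat
  have hmain : 2 * s (N - 1) * G s α 0 (N - 1) < G s α 0 N - cos (α 0) ^ 2 * G s α 1 (N - 1)
      + 2 * ((-1 : ℝ) ^ (N + 1).toNat * Pprod α 0 N) := by
    rw [hrec]; linear_combination hright + hleft + 2 * hsign
  have hD := (mul_pos (mul_pos two_pos (hs (N - 1))) (G_pos hs hα hN₁.le)).trans hmain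
  refine ⟨hmain, hD, ?_⟩
  rw [div_lt_div_iff₀ hD (mul_pos two_pos (hs (N - 1)))]
  linarith

theorem stmt14 (s α : ℤ → ℝ) (N : ℤ) (hN : 2 ≤ N) (hper : α N = α 0)
    (hs : ∀ i, 0 < s i)
    (hα : ∀ i, 0 < Real.cos (α i)) (hα' : ∀ i, Real.cos (α i) ≤ 1) :
    2 * s (N-1) * G s α 0 (N-1) <
        G s α 0 N - (Real.cos (α 0))^2 * G s α 1 (N-1)
          + 2 * ((-1 : ℝ)^(N+1).toNat * Pprod α 0 N) ∧
    0 < G s α 0 N - (Real.cos (α 0))^2 * G s α 1 (N-1)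
          + 2 * ((-1 : ℝ)^(N+1).toNat * Pprod α 0 N) ∧
    G s α 0 (N-1) /
        (G s α 0 N - (Real.cos (α 0))^2 * G s α 1 (N-1)
          + 2 * ((-1 : ℝ)^(N+1).toNat * Pprod α 0 N)) < 1 / (2 * s (N-1)) :=
  stmt14_general s α N hN hper hs hα
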